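/- Let x ∈ W_T of type affine SL₂ with |LP(x)| = 3. Then LP(x) ≠ {s₁, e, s₀}; equivalently, a three-element length positive set never consists of the identity together with both simple reflections, and in fact LP(x) is entirely left-sided or entirely right-sided. -/
import Mathlib


/-! A concrete model of the Weyl group of affine SL₂ (the infinite dihedral group),
its affine real roots, its coweight lattice, the double affine Weyl semigroup
`W_T = W ⋉ T`, the length functional and length positive sets, and the quantum
Bruhat graph `QBG(W)` with its paths, weights and distances. -/

namespace SL2hat

/-- An element `w₀ τ^{t·α∨}` of the infinite dihedral Weyl group `W` of affine SL₂;
`eps = true` means `w₀ = s₁`. -/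
structure D where
  eps : Bool
  t : ℤ
deriving DecidableEq

/-- Multiplication in `W` (using `τ^{t} s₁ = s₁ τ^{-t}`). -/
def dmul (a b : D) : D := ⟨xor a.eps b.eps, (if b.eps then -a.t else a.t) + b.t⟩

/-- The identity element `e`. -/
def done : D := ⟨false, 0⟩

/-- Inversion in `W`. -/
def dinv (a : D) : D := ⟨a.eps, if a.eps then a.t else -a.t⟩

/-- The simple reflection `s₁`. -/
def s1 : D := ⟨true, 0⟩

/-- The simple reflection `s₀ = s₁ τ^{-α∨}`. -/
def s0 : D := ⟨true, -1⟩

/-- The translation `τ^{t·α∨}`. -/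
def tau (t : ℤ) : D := ⟨false, t⟩

/-- The length function `ℓ` of the infinite dihedral group. -/
def len (a : D) : ℤ := if a.eps then (if 0 ≤ a.t then 2*a.t+1 else -(2*a.t)-1) else 2*|a.t|

/-- A real affine root `c·α + n·δ` of affine SL₂ (with `c = ±1`). -/
structure R where
  c : ℤ
  n : ℤ
deriving DecidableEq

/-- Positivity of roots: `Φ⁺ = {sgn(n)(α + nδ) : n ∈ ℤ}`. -/
def R.pos (β : R) : Prop := (β.c = 1 ∧ 0 ≤ β.n) ∨ (β.c = -1 ∧ 1 ≤ β.n)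

/-- Negation of a root. -/
def rneg (β : R) : R := ⟨-β.c, -β.n⟩

/-- The simple root `α̃₁ = α`. -/
def alpha1 : R := ⟨1, 0⟩

/-- The simple root `α̃₀ = -α + δ`. -/
def alpha0 : R := ⟨-1, 1⟩

/-- The simple (affine) roots. -/
def R.simple (β : R) : Prop := β = alpha1 ∨ β = alpha0

/-- The reflection `s_β ∈ W` associated to the real root `β` (so `s_{α+nδ} = (true, n)`). -/
def refl (β : R) : D := ⟨true, β.c * β.n⟩

/-- The action of `W` on the real roots: `w₀τ^λ(α + nδ) = w₀α + (n − ⟨α, λ⟩)δ`. -/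
def ract (g : D) (β : R) : R := ⟨if g.eps then -β.c else β.c, β.n - 2 * g.t * β.c⟩

/-- `⟨2ρ, β∨⟩ = 2·ht(β)` for a real root `β = cα + nδ` (of height `c + 2n`). -/
def tworho (β : R) : ℤ := 2*β.c + 4*β.n

/-- A coweight `k·α∨ + m·δ + l·Λ₀`. -/
structure P where
  k : ℤ
  m : ℤ
  l : ℤ
deriving DecidableEq

/-- The zero coweight. -/
def pzero : P := ⟨0, 0, 0⟩

/-- Addition of coweights. -/
def padd (μ ν : P) : P := ⟨μ.k+ν.k, μ.m+ν.m, μ.l+ν.l⟩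

/-- Subtraction of coweights. -/
def psub (μ ν : P) : P := ⟨μ.k-ν.k, μ.m-ν.m, μ.l-ν.l⟩

/-- The coroot `β∨ = c·α∨ + n·δ` of the real root `β = c·α + n·δ`. -/
def coroot (β : R) : P := ⟨β.c, β.n, 0⟩

/-- The pairing `⟨β, μ⟩` between roots and coweights. -/
def pairing (β : R) (μ : P) : ℤ := 2*β.c*μ.k + β.n*μ.l

/-- The action of `W` on coweights:
`w₀τ^λ(μ₀ + mδ + lΛ₀) = w₀μ₀ + l·w₀λ + (m − ⟨μ₀,λ⟩ − (l/2)⟨λ,λ⟩)δ + lΛ₀`. -/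
def pact (g : D) (μ : P) : P :=
  ⟨(if g.eps then -1 else 1) * (μ.k + μ.l * g.t), μ.m - 2*μ.k*g.t - μ.l * g.t^2, μ.l⟩

/-- An element `w ε^μ` of the double affine Weyl semigroup `W_T`. -/
structure WT where
  w : D
  mu : P

/-- The level of `x = w ε^{kα∨ + mδ + lΛ₀}` is `l`. -/
def WT.lev (x : WT) : ℤ := x.mu.l

/-- Membership of a coweight in the (integral) Tits cone `T`. -/
def inTits (μ : P) : Prop := 0 < μ.l ∨ (μ.l = 0 ∧ μ.k = 0)

/-- The product in `W_T`: `(w ε^μ)(w' ε^{μ'}) = ww' ε^{(w')⁻¹μ + μ'}`. -/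
def wtmul (x y : WT) : WT := ⟨dmul x.w y.w, padd (pact (dinv y.w) x.mu) y.mu⟩

/-- Indicator function of a proposition (e.g. `Φ⁺(·)`). -/
noncomputable def ind (p : Prop) : ℤ := @ite _ p (Classical.dec p) 1 0

/-- The length functional `ℓ(x, β) = ⟨β, μ⟩ + Φ⁺(β) − Φ⁺(wβ)` for `x = w ε^μ`. -/
noncomputable def lfun (x : WT) (β : R) : ℤ :=
  pairing β x.mu + ind β.pos - ind (ract x.w β).pos

/-- The length positive set `LP(x) = {v ∈ W : ℓ(x, vβ) ≥ 0 for all β ∈ Φ⁺}`. -/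
def LP (x : WT) : Set D := {v : D | ∀ β : R, β.pos → 0 ≤ lfun x (ract v β)}

/-- An edge of the quantum Bruhat graph from `u` to `v = u s_β`, `β ∈ Φ⁺`:
either a Bruhat edge (`ℓ(v) = ℓ(u) + 1`) or a quantum edge
(`ℓ(v) = ℓ(u) + 1 − ⟨2ρ, β∨⟩`). -/
structure Edge (u v : D) where
  β : R
  hpos : β.pos
  hv : v = dmul u (refl β)
  cond : len v = len u + 1 ∨ len v = len u + 1 - tworho β

/-- The weight of an edge: `0` for a Bruhat edge, `β∨` for a quantum edge. -/
def Edge.wt {u v : D} (e : Edge u v) : P :=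
  if len v = len u + 1 then pzero else coroot e.β

/-- A path in the quantum Bruhat graph. -/
inductive Path : D → D → Type
  | nil (u : D) : Path u u
  | cons {u v w : D} (e : Edge u v) (p : Path v w) : Path u w

/-- The length (number of edges) of a path. -/
def Path.length : ∀ {u v : D}, Path u v → ℕ
  | _, _, .nil _ => 0
  | _, _, .cons _ p => p.length + 1

/-- The total weight of a path. -/
def Path.wt : ∀ {u v : D}, Path u v → P
  | _, _, .nil _ => pzero
  | _, _, .cons e p => padd e.wt p.wt

/-- A path is shortest if no path between the same endpoints has fewer edges. -/
def Shortest {u v : D} (p : Path u v) : Prop := ∀ q : Path u v, p.length ≤ q.length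

/-- The distance `d(u ⇒ v)` in `QBG(W)`. -/
noncomputable def dist (u v : D) : ℕ := sInf {n | ∃ p : Path u v, p.length = n}

/-- The Bruhat order on `W`, generated by `a < a·s_β` whenever `β ∈ Φ⁺` and
`ℓ(a) < ℓ(a·s_β)`. -/
def bruhatLE : D → D → Prop :=
  Relation.ReflTransGen (fun a b => (∃ β : R, β.pos ∧ b = dmul a (refl β)) ∧ len a < len b)

/-- `w` is left-sided if `s₁ w > w` (the identity is both left- and right-sided). -/
def leftSided (w : D) : Prop := len w < len (dmul s1 w)

/-- `w` is right-sided if `s₀ w > w`. -/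
def rightSided (w : D) : Prop := len w < len (dmul s0 w)

/-- Two elements are same-sided if both are left-sided or both are right-sided. -/
def sameSided (u v : D) : Prop := (leftSided u ∧ leftSided v) ∨ (rightSided u ∧ rightSided v)

/-- The set `M_{x,y}` of distance minimising pairs
`(u,v) ∈ LP(x) × LP(y)` for `d(u ⇒ w_y v)`. -/
noncomputable def M (x y : WT) : Set (D × D) :=
  {uv | uv.1 ∈ LP x ∧ uv.2 ∈ LP y ∧
    ∀ u' v' : D, u' ∈ LP x → v' ∈ LP y →
      dist uv.1 (dmul y.w uv.2) ≤ dist u' (dmul y.w v')}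

/-- Schremmer's formula `x *_{u,v}^p y = w_x u v⁻¹ ε^{v u⁻¹ μ_x + μ_y − v·wt(p)}`. -/
def demFormula (x y : WT) (u v : D) (p : Path u (dmul y.w v)) : WT :=
  ⟨dmul x.w (dmul u (dinv v)),
    psub (padd (pact (dmul v (dinv u)) x.mu) y.mu) (pact v p.wt)⟩

end SL2hat

namespace SL2hat

-- ==== auxiliary lemmas ====

lemma ind_nonneg (p : Prop) : 0 ≤ ind p := by unfold ind; split <;> norm_num

lemma ind_le_one (p : Prop) : ind p ≤ 1 := by unfold ind; split <;> norm_num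

lemma ind_eq_zero {p : Prop} (h : ¬ p) : ind p = 0 := by
  unfold ind; split <;> [exact absurd ‹p› h; rfl]

lemma not_of_ind_le {p : Prop} (h : ind p ≤ 0) : ¬ p := by
  intro hp; unfold ind at h; split at h <;> omega

/-- combined bound form -/
def Bnds (x : WT) (A B : ℤ) : Prop :=
  (∀ m : ℤ, A ≤ m → 0 ≤ lfun x ⟨1, m⟩) ∧ (∀ m : ℤ, B ≤ m → 0 ≤ lfun x ⟨-1, m⟩)

lemma bnds_of_mem_f {x : WT} {t : ℤ} (h : (⟨false, t⟩ : D) ∈ LP x) :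
    Bnds x (-2*t) (2*t+1) := by
  constructor
  · intro m hm
    have := h ⟨1, m + 2*t⟩ (Or.inl ⟨rfl, show (0:ℤ) ≤ m + 2*t by omega⟩)
    have e : ract ⟨false, t⟩ ⟨1, m + 2*t⟩ = ⟨1, m⟩ := by simp [ract]
    rwa [e] at this
  · intro m hm
    have := h ⟨-1, m - 2*t⟩ (Or.inr ⟨rfl, show (1:ℤ) ≤ m - 2*t by omega⟩)
    have e : ract ⟨false, t⟩ ⟨-1, m - 2*t⟩ = ⟨-1, m⟩ := by simp [ract]
    rwa [e] at this

lemma bnds_of_mem_t {x : WT} {t : ℤ} (h : (⟨true, t⟩ : D) ∈ LP x) :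
    Bnds x (2*t+1) (-2*t) := by
  constructor
  · intro m hm
    have := h ⟨-1, m - 2*t⟩ (Or.inr ⟨rfl, show (1:ℤ) ≤ m - 2*t by omega⟩)
    have e : ract ⟨true, t⟩ ⟨-1, m - 2*t⟩ = ⟨1, m⟩ := by simp [ract]
    rwa [e] at this
  · intro m hm
    have := h ⟨1, m + 2*t⟩ (Or.inl ⟨rfl, show (0:ℤ) ≤ m + 2*t by omega⟩)
    have e : ract ⟨true, t⟩ ⟨1, m + 2*t⟩ = ⟨-1, m⟩ := by simp [ract]
    rwa [e] at this

lemma mem_of_bnds_f {x : WT} {A B : ℤ} (h : Bnds x A B) (t : ℤ)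
    (h1 : A ≤ -2*t) (h2 : B ≤ 2*t+1) : (⟨false, t⟩ : D) ∈ LP x := by
  rintro ⟨c, n⟩ (⟨rfl, hn⟩ | ⟨rfl, hn⟩)
  · have e : ract ⟨false, t⟩ ⟨1, n⟩ = ⟨1, n - 2*t⟩ := by simp [ract]
    rw [e]; refine h.1 _ ?_; have hn' : (0:ℤ) ≤ n := hn; omega
  · have e : ract ⟨false, t⟩ ⟨-1, n⟩ = ⟨-1, n + 2*t⟩ := by simp [ract]
    rw [e]; refine h.2 _ ?_; have hn' : (1:ℤ) ≤ n := hn; omega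

lemma mem_of_bnds_t {x : WT} {A B : ℤ} (h : Bnds x A B) (t : ℤ)
    (h1 : A ≤ 2*t+1) (h2 : B ≤ -2*t) : (⟨true, t⟩ : D) ∈ LP x := by
  rintro ⟨c, n⟩ (⟨rfl, hn⟩ | ⟨rfl, hn⟩)
  · have e : ract ⟨true, t⟩ ⟨1, n⟩ = ⟨-1, n - 2*t⟩ := by simp [ract]
    rw [e]; refine h.2 _ ?_; have hn' : (0:ℤ) ≤ n := hn; omega
  · have e : ract ⟨true, t⟩ ⟨-1, n⟩ = ⟨1, n + 2*t⟩ := by simp [ract]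
    rw [e]; refine h.1 _ ?_; have hn' : (1:ℤ) ≤ n := hn; omega

lemma four_distinct {S : Set D} (hS : S.ncard = 3) {a b c d : D}
    (ha : a ∈ S) (hb : b ∈ S) (hc : c ∈ S) (hd : d ∈ S)
    (hab : a ≠ b) (hac : a ≠ c) (had : a ≠ d)
    (hbc : b ≠ c) (hbd : b ≠ d) (hcd : c ≠ d) : False := by
  obtain ⟨x, y, z, hxy, hxz, hyz, rfl⟩ := Set.ncard_eq_three.mp hS
  simp only [Set.mem_insert_iff, Set.mem_singleton_iff] at ha hb hc hd
  rcases ha with rfl | rfl | rfl <;> rcases hb with rfl | rfl | rfl <;>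
    rcases hc with rfl | rfl | rfl <;> rcases hd with rfl | rfl | rfl <;> tauto

lemma lemA (x : WT) (h1 : s1 ∈ LP x) (h0 : s0 ∈ LP x) (hx : (LP x).ncard = 3) :
    False := by
  obtain ⟨⟨ew, s⟩, k, mm, l⟩ := x
  have b1 := bnds_of_mem_t (t := 0) h1
  have b0 := bnds_of_mem_t (t := -1) h0
  norm_num at b1 b0
  have bb : Bnds ⟨⟨ew, s⟩, k, mm, l⟩ (-1) 0 := ⟨b0.1, b1.2⟩
  -- level is nonnegative
  have hl : 0 ≤ l := by
    by_contra hneg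
    push_neg at hneg
    have h := bb.2 (2*|k| + 2) (by positivity)
    unfold lfun pairing at h
    simp only at h
    have i1 := ind_nonneg (R.pos ⟨-1, 2*|k| + 2⟩)
    have i2 := ind_le_one (R.pos ⟨-1, 2*|k| + 2⟩)
    have i3 := ind_nonneg (R.pos (ract ⟨ew, s⟩ ⟨-1, 2*|k| + 2⟩))
    have hk1 := le_abs_self k
    have hk2 := neg_abs_le k
    nlinarith
  -- two key inequalities
  have hA := bb.1 (-1) le_rfl
  have hB := bb.2 0 le_rfl
  unfold lfun pairing at hA hB
  simp only at hA hB
  rw [ind_eq_zero (by simp [R.pos])] at hA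
  rw [ind_eq_zero (by simp [R.pos])] at hB
  have i1 := ind_nonneg (R.pos (ract ⟨ew, s⟩ ⟨1, -1⟩))
  have i2 := ind_nonneg (R.pos (ract ⟨ew, s⟩ ⟨-1, 0⟩))
  have hk : k = 0 := by omega
  have hl0 : l = 0 := by omega
  have hP1 : ¬ (ract ⟨ew, s⟩ ⟨1, -1⟩).pos := not_of_ind_le (by omega)
  have hP2 : ¬ (ract ⟨ew, s⟩ ⟨-1, 0⟩).pos := not_of_ind_le (by omega)
  simp only [ract, R.pos] at hP1 hP2
  cases ew with
  | true => simp at hP1 hP2; omega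
  | false =>
    simp at hP1 hP2
    have hs : s = 0 := by omega
    subst hs hk hl0
    have hall : ∀ v : D, v ∈ LP ⟨⟨false, 0⟩, 0, mm, 0⟩ := by
      intro v β hβ
      unfold lfun pairing ract
      simp
    exact four_distinct hx (hall ⟨false, 0⟩) (hall ⟨false, 1⟩) (hall ⟨true, 0⟩)
      (hall ⟨true, -1⟩) (by decide) (by decide) (by decide) (by decide) (by decide)
      (by decide)


lemma not_left_f {p : ℤ} (h : ¬ leftSided ⟨false, p⟩) : p < 0 := by
  unfold leftSided dmul s1 len at h
  simp at h
  rcases abs_cases p with ⟨h1, h2⟩ | ⟨h1, h2⟩ <;> omega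

lemma not_left_t {p : ℤ} (h : ¬ leftSided ⟨true, p⟩) : 0 ≤ p := by
  unfold leftSided dmul s1 len at h
  simp at h
  rcases abs_cases p with ⟨h1, h2⟩ | ⟨h1, h2⟩ <;> omega

lemma not_right_f {q : ℤ} (h : ¬ rightSided ⟨false, q⟩) : 0 < q := by
  unfold rightSided dmul s0 len at h
  simp at h
  rcases abs_cases q with ⟨h1, h2⟩ | ⟨h1, h2⟩ <;>
    rcases abs_cases (q + -1) with ⟨h3, h4⟩ | ⟨h3, h4⟩ <;> omega

lemma not_right_t {q : ℤ} (h : ¬ rightSided ⟨true, q⟩) : q < 0 := by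
  unfold rightSided dmul s0 len at h
  simp at h
  rcases abs_cases (1 + q) with ⟨h3, h4⟩ | ⟨h3, h4⟩ <;> omega

lemma not_left_s1 : ¬ leftSided s1 := by
  unfold leftSided dmul s1 len; simp

lemma not_right_s0 : ¬ rightSided s0 := by
  unfold rightSided dmul s0 len; norm_num


/-- For `x ∈ W_T` of type affine SL₂ with `|LP(x)| = 3`, the set `LP(x)` is not
`{s₁, e, s₀}`; in fact `LP(x)` is entirely left-sided or entirely right-sided. -/
theorem statement_8 (x : WT) (hx : (LP x).ncard = 3) :
    LP x ≠ {s1, done, s0} ∧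
    ((∀ v ∈ LP x, leftSided v) ∨ (∀ v ∈ LP x, rightSided v)) := by
  have key : (∀ v ∈ LP x, leftSided v) ∨ (∀ v ∈ LP x, rightSided v) := by
    by_contra hcon
    push_neg at hcon
    obtain ⟨⟨u, hu, hul⟩, ⟨v, hv, hvr⟩⟩ := hcon
    obtain ⟨ue, p⟩ := u
    obtain ⟨ve, q⟩ := v
    cases ue <;> cases ve
    · -- u = (false,p), p<0 ; v = (false,q), q>0
      have hp := not_left_f hul
      have hq := not_right_f hvr
      have bb : Bnds x (-2*q) (2*p+1) := ⟨(bnds_of_mem_f hv).1, (bnds_of_mem_f hu).2⟩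
      exact four_distinct hx (mem_of_bnds_f bb (-1) (by omega) (by omega))
        (mem_of_bnds_f bb 0 (by omega) (by omega))
        (mem_of_bnds_t bb 0 (by omega) (by omega))
        (mem_of_bnds_t bb (-1) (by omega) (by omega))
        (by decide) (by decide) (by decide) (by decide) (by decide) (by decide)
    · -- u = (false,p), p<0 ; v = (true,q), q<0
      have hp := not_left_f hul
      have hq := not_right_t hvr
      have bb : Bnds x (2*q+1) (2*p+1) := ⟨(bnds_of_mem_t hv).1, (bnds_of_mem_f hu).2⟩
      exact four_distinct hx (mem_of_bnds_f bb (-1) (by omega) (by omega))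
        (mem_of_bnds_f bb 0 (by omega) (by omega))
        (mem_of_bnds_t bb 0 (by omega) (by omega))
        (mem_of_bnds_t bb (-1) (by omega) (by omega))
        (by decide) (by decide) (by decide) (by decide) (by decide) (by decide)
    · -- u = (true,p), p≥0 ; v = (false,q), q>0
      have hp := not_left_t hul
      have hq := not_right_f hvr
      have bb : Bnds x (-2*q) (-2*p) := ⟨(bnds_of_mem_f hv).1, (bnds_of_mem_t hu).2⟩
      exact four_distinct hx (mem_of_bnds_f bb 0 (by omega) (by omega))
        (mem_of_bnds_f bb 1 (by omega) (by omega))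
        (mem_of_bnds_t bb 0 (by omega) (by omega))
        (mem_of_bnds_t bb (-1) (by omega) (by omega))
        (by decide) (by decide) (by decide) (by decide) (by decide) (by decide)
    · -- u = (true,p), p≥0 ; v = (true,q), q<0
      have hp := not_left_t hul
      have hq := not_right_t hvr
      have bb : Bnds x (2*q+1) (-2*p) := ⟨(bnds_of_mem_t hv).1, (bnds_of_mem_t hu).2⟩
      exact lemA x (mem_of_bnds_t bb 0 (by omega) (by omega))
        (mem_of_bnds_t bb (-1) (by omega) (by omega)) hx
  refine ⟨?_, key⟩
  intro heq
  rcases key with hL | hR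
  · exact not_left_s1 (hL s1 (by rw [heq]; simp))
  · exact not_right_s0 (hR s0 (by rw [heq]; simp))
end SL2hat
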